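/- arXiv:2310.07262 — 5 statements merged into one kernel-verified Lean document; each statement's English description precedes it below -/
import Mathlib

section
/- Let Σ_w be a real symmetric positive definite n×n matrix. For any real symmetric positive definite matrix Σ and any real skew-symmetric matrix S, the matrix A = (-(1/2)Σ_w + S)Σ⁻¹ is Hurwitz stable (all eigenvalues have strictly negative real part). -/
/-!
If `(A Σ⁻¹) v = μ v` with `v ≠ 0`, then `u = Σ⁻¹ v ≠ 0` satisfies `A u = μ Σ u`, hence
`u* A u = μ (u* Σ u)` with `u* Σ u > 0` real. For `A = -½ Σ_w + S` the skew part `S`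
contributes nothing to `Re (u* A u)`, which is therefore `-½ Re (u* Σ_w u) < 0`; so `Re μ < 0`.
-/

open Matrix
open scoped ComplexOrder

/-- A real matrix is Hurwitz stable if all its (complex) eigenvalues have
strictly negative real part. -/
def IsHurwitz {n : ℕ} (A : Matrix (Fin n) (Fin n) ℝ) : Prop :=
  ∀ μ ∈ spectrum ℂ (A.map (Complex.ofReal)), μ.re < 0

namespace Matrix

variable {n : Type*} [Fintype n]

theorem map_nonsing_inv {K L : Type*} [Field K] [Field L] [DecidableEq n] (f : K →+* L)
    (M : Matrix n n K) : M⁻¹.map f = (M.map f)⁻¹ := by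
  rw [inv_def, inv_def, ← f.mapMatrix_apply, ← f.mapMatrix_apply, ← f.map_adjugate, ← f.map_det]
  ext i j
  simp

theorem exists_mulVec_eq_smul_of_mem_spectrum {K : Type*} [Field K] [DecidableEq n]
    {M : Matrix n n K} {μ : K} (hμ : μ ∈ spectrum K M) : ∃ v ≠ 0, M *ᵥ v = μ • v := by
  rw [← spectrum_toLin', ← Module.End.hasEigenvalue_iff_mem_spectrum] at hμ
  obtain ⟨v, hv⟩ := hμ.exists_hasEigenvector
  exact ⟨v, hv.2, by simpa using hv.apply_eq_smul⟩

theorem dotProduct_mulVec_self_eq_zero {R : Type*} [CommRing R] [IsAddTorsionFree R]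
    {S : Matrix n n R} (hS : Sᵀ = -S) (x : n → R) : x ⬝ᵥ (S *ᵥ x) = 0 := by
  have h : x ⬝ᵥ (S *ᵥ x) = -(x ⬝ᵥ (S *ᵥ x)) := by
    conv_lhs => rw [dotProduct_mulVec, ← mulVec_transpose, hS, neg_mulVec, neg_dotProduct,
      dotProduct_comm]
  exact self_eq_neg.mp h

theorem re_star_dotProduct_map_ofReal_mulVec (M : Matrix n n ℝ) (u : n → ℂ) :
    (star u ⬝ᵥ (M.map (↑) *ᵥ u)).re =
      (fun i ↦ (u i).re) ⬝ᵥ (M *ᵥ fun i ↦ (u i).re) +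
        (fun i ↦ (u i).im) ⬝ᵥ (M *ᵥ fun i ↦ (u i).im) := by
  simp only [dotProduct, mulVec, map_apply, Pi.star_apply, Finset.mul_sum, Complex.re_sum,
    ← Finset.sum_add_distrib]
  refine Finset.sum_congr rfl fun i _ ↦ Finset.sum_congr rfl fun j _ ↦ ?_
  simp [Complex.mul_re]

theorem re_star_dotProduct_map_ofReal_mulVec_pos {M : Matrix n n ℝ}
    (hM : ∀ x ≠ 0, 0 < x ⬝ᵥ (M *ᵥ x)) {u : n → ℂ} (hu : u ≠ 0) :
    0 < (star u ⬝ᵥ (M.map (↑) *ᵥ u)).re := by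
  have hM_nonneg (x : n → ℝ) : 0 ≤ x ⬝ᵥ (M *ᵥ x) := by
    rcases eq_or_ne x 0 with rfl | hx
    · simp
    · exact (hM x hx).le
  rw [re_star_dotProduct_map_ofReal_mulVec]
  by_cases hre : (fun i ↦ (u i).re) = 0
  · have him : (fun i ↦ (u i).im) ≠ 0 := fun him ↦
      hu (funext fun i ↦ Complex.ext (congrFun hre i) (congrFun him i))
    exact add_pos_of_nonneg_of_pos (hM_nonneg _) (hM _ him)
  · exact add_pos_of_pos_of_nonneg (hM _ hre) (hM_nonneg _)

theorem PosDef.map_ofReal {M : Matrix n n ℝ} (hM : M.PosDef) :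
    (M.map ((↑) : ℝ → ℂ)).PosDef := by
  have hherm : (M.map ((↑) : ℝ → ℂ)).IsHermitian := by
    rw [IsHermitian, ← conjTranspose_map _ fun x ↦ (Complex.conj_ofReal x).symm, hM.isHermitian.eq]
  refine .of_dotProduct_mulVec_pos hherm fun u hu ↦ RCLike.pos_iff.mpr
    ⟨re_star_dotProduct_map_ofReal_mulVec_pos (fun x hx ↦ ?_) hu,
      hherm.im_star_dotProduct_mulVec_self u⟩
  simpa using hM.dotProduct_mulVec_pos hx

theorem re_lt_zero_of_mem_spectrum_mul_inv {𝕜 : Type*} [RCLike 𝕜] [DecidableEq n]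
    {A P : Matrix n n 𝕜} (hP : P.PosDef) (hA : ∀ u ≠ 0, RCLike.re (star u ⬝ᵥ (A *ᵥ u)) < 0)
    {μ : 𝕜} (hμ : μ ∈ spectrum 𝕜 (A * P⁻¹)) : RCLike.re μ < 0 := by
  obtain ⟨v, hv, hAv⟩ := exists_mulVec_eq_smul_of_mem_spectrum hμ
  have hPu : P *ᵥ (P⁻¹ *ᵥ v) = v := by
    rw [mulVec_mulVec, mul_nonsing_inv _ ((isUnit_iff_isUnit_det P).mp hP.isUnit), one_mulVec]
  set u := P⁻¹ *ᵥ v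
  have hu : u ≠ 0 := fun h ↦ hv (by rw [← hPu, h, mulVec_zero])
  have hAu : A *ᵥ u = μ • (P *ᵥ u) := by
    rw [hPu, ← hAv, ← mulVec_mulVec]
  have hquad : star u ⬝ᵥ (A *ᵥ u) = μ * (star u ⬝ᵥ (P *ᵥ u)) := by
    rw [hAu, dotProduct_smul, smul_eq_mul]
  obtain ⟨hre, him⟩ := RCLike.pos_iff.mp (hP.dotProduct_mulVec_pos hu)
  have := hA u hu
  rw [hquad, RCLike.mul_re, him, mul_zero, sub_zero] at this
  exact neg_of_mul_neg_left this hre.le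

end Matrix

theorem stmt0 {n : ℕ} (Sw Sig S : Matrix (Fin n) (Fin n) ℝ)
    (hSw : Sw.PosDef) (hSig : Sig.PosDef) (hS : Sᵀ = -S) :
    IsHurwitz (((-(1/2 : ℝ)) • Sw + S) * Sig⁻¹) := by
  intro μ hμ
  rw [show Complex.ofReal = ⇑Complex.ofRealHom from rfl, Matrix.map_mul, map_nonsing_inv] at hμ
  refine re_lt_zero_of_mem_spectrum_mul_inv hSig.map_ofReal (fun u hu ↦ ?_) hμ
  have hdiss (x : Fin n → ℝ) (hx : x ≠ 0) : 0 < x ⬝ᵥ (-((-(1/2 : ℝ)) • Sw + S) *ᵥ x) := by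
    have hSwx : 0 < x ⬝ᵥ (Sw *ᵥ x) := by simpa using hSw.dotProduct_mulVec_pos hx
    simp only [neg_add, neg_smul, neg_neg, add_mulVec, smul_mulVec, neg_mulVec, dotProduct_add,
      dotProduct_neg, dotProduct_smul, dotProduct_mulVec_self_eq_zero hS, smul_eq_mul]
    linarith
  have := re_star_dotProduct_map_ofReal_mulVec_pos hdiss hu
  rwa [Matrix.map_neg _ Complex.ofReal_neg, neg_mulVec, dotProduct_neg, Complex.neg_re,
    neg_pos] at this
end

section
/- Fix a symmetric positive definite matrix Σ_w. The map f(Σ, S) = (-(1/2)Σ_w + S)Σ⁻¹ from the set of pairs (symmetric positive definite Σ, skew-symmetric S) to the set of Hurwitz stable n×n real matrices is a bijection. -/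
/-!
The map is inverted by `A ↦ (P, A * P + (1/2) • Σ_w)`, where `P` is the solution of the Lyapunov
equation `A * P + P * Aᵀ = -Σ_w`; indeed, for symmetric `P`, the matrix `A * P + (1/2) • Σ_w` is
skew-symmetric exactly when `P` solves that equation.

A positive definite solution forces `A` to be Hurwitz: pairing the equation with a left eigenvector
for `μ` gives `2 (re μ) (w* P w) = -(w* Σ_w w)`. Conversely, for Hurwitz `A` the Lyapunov operator
`X ↦ A * X + X * Aᵀ` is injective (Sylvester: `χ_A(-Aᵀ)` is invertible), which gives uniqueness
and existence of the solution. Positive definiteness of the solution follows by deforming `A`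
along the Hurwitz matrices `(1 - θ) • A - (θ / 2) • 1` to `-(1/2) • 1`, whose solution is `Σ_w`:
the solutions stay symmetric and invertible and vary continuously, so none of their eigenvalues
can cross zero.
-/

open Matrix Polynomial

theorem SemiconjBy.aeval {R S : Type*} [CommSemiring R] [Semiring S] [Algebra R S] {x a b : S}
    (h : SemiconjBy x a b) (p : R[X]) : SemiconjBy x (aeval a p) (aeval b p) := by
  induction p using Polynomial.induction_on' with
  | add p q hp hq => simpa only [map_add] using hp.add_right hq
  | monomial k r =>
    simpa only [aeval_monomial] using
      SemiconjBy.mul_right (Algebra.commute_algebraMap_right r x) (h.pow_right k)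

theorem Matrix.eq_zero_of_mul_add_mul_eq_zero {K ι : Type*} [Field K] [IsAlgClosed K]
    [Fintype ι] [DecidableEq ι] {A B X : Matrix ι ι K}
    (hAB : ∀ μ ∈ spectrum K A, -μ ∉ spectrum K B) (h : A * X + X * B = 0) : X = 0 := by
  cases isEmpty_or_nonempty ι
  · exact Subsingleton.elim _ _
  have hX : SemiconjBy X (-B) A := by
    rw [SemiconjBy, mul_neg, neg_eq_iff_add_eq_zero, add_comm, h]
  have hunit : IsUnit (aeval (-B) A.charpoly) := by
    by_contra hnu
    rw [← spectrum.zero_mem_iff K, spectrum.map_polynomial_aeval_of_degree_pos _ _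
      (by rw [charpoly_degree_eq_dim]; exact_mod_cast Fintype.card_pos)] at hnu
    obtain ⟨ν, hν, hroot⟩ := hnu
    refine hAB ν (mem_spectrum_iff_isRoot_charpoly.mpr hroot) ?_
    rwa [← neg_neg B, ← spectrum.neg_eq, Set.neg_mem_neg]
  have hχ := hX.aeval A.charpoly
  rw [SemiconjBy, aeval_self_charpoly, zero_mul] at hχ
  exact hunit.mul_left_eq_zero.mp hχ

theorem Matrix.exists_vecMul_eq_smul_of_mem_spectrum {K ι : Type*} [Field K] [Fintype ι]
    [DecidableEq ι] {M : Matrix ι ι K} {μ : K} (hμ : μ ∈ spectrum K M) :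
    ∃ w ≠ 0, w ᵥ* M = μ • w := by
  rw [spectrum.mem_iff, isUnit_iff_isUnit_det, isUnit_iff_ne_zero, not_not] at hμ
  obtain ⟨w, hw, hwM⟩ := exists_vecMul_eq_zero_iff.mpr hμ
  refine ⟨w, hw, ?_⟩
  rwa [vecMul_sub, sub_eq_zero, Algebra.algebraMap_eq_smul_one, vecMul_smul, vecMul_one,
    eq_comm] at hwM

section RealMatrix

variable {ι : Type*} [Fintype ι]

theorem Matrix.PosDef.re_star_dotProduct_map_ofReal_mulVec_pos {M : Matrix ι ι ℝ}
    (hM : M.PosDef) {w : ι → ℂ} (hw : w ≠ 0) :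
    0 < (star w ⬝ᵥ M.map Complex.ofReal *ᵥ w).re := by
  set a : ι → ℝ := fun i => (w i).re
  set b : ι → ℝ := fun i => (w i).im
  have hre : (star w ⬝ᵥ M.map Complex.ofReal *ᵥ w).re = a ⬝ᵥ M *ᵥ a + b ⬝ᵥ M *ᵥ b := by
    simp only [dotProduct, mulVec, Finset.mul_sum, Complex.re_sum, ← Finset.sum_add_distrib]
    refine Finset.sum_congr rfl fun i _ => Finset.sum_congr rfl fun j _ => ?_
    simp [a, b, Complex.mul_re, Complex.mul_im]
  have hab : a ≠ 0 ∨ b ≠ 0 := by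
    by_contra! h
    exact hw (funext fun i => Complex.ext (congrFun h.1 i) (congrFun h.2 i))
  have hnonneg (v : ι → ℝ) : 0 ≤ v ⬝ᵥ M *ᵥ v := by
    simpa using hM.posSemidef.dotProduct_mulVec_nonneg v
  have hpos {v : ι → ℝ} (hv : v ≠ 0) : 0 < v ⬝ᵥ M *ᵥ v := by
    simpa using hM.dotProduct_mulVec_pos hv
  rw [hre]
  rcases hab with h | h
  · linarith [hpos h, hnonneg b]
  · linarith [hpos h, hnonneg a]

theorem Matrix.map_ofReal_mul_add_mul_transpose (A X : Matrix ι ι ℝ) :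
    (A * X + X * Aᵀ).map Complex.ofReal = A.map Complex.ofReal * X.map Complex.ofReal
      + X.map Complex.ofReal * (A.map Complex.ofReal)ᵀ := by
  ext i j
  simp [Matrix.mul_apply]

theorem Matrix.posDef_of_forall_mem_sphere {M : Matrix ι ι ℝ} (hM : M.IsHermitian)
    (h : ∀ v ∈ Metric.sphere (0 : ι → ℝ) 1, 0 < v ⬝ᵥ M *ᵥ v) : M.PosDef := by
  refine .of_dotProduct_mulVec_pos hM fun v hv => ?_
  have hv' : ‖v‖ ≠ 0 := norm_ne_zero_iff.mpr hv
  have := h (‖v‖⁻¹ • v) (by simp [norm_smul, hv'])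
  rw [mulVec_smul, dotProduct_smul, smul_dotProduct, smul_eq_mul, smul_eq_mul] at this
  simpa using pos_of_mul_pos_right (pos_of_mul_pos_right this (by positivity)) (by positivity)

theorem Matrix.isOpen_setOf_posDef {X : Type*} [TopologicalSpace X] {f : X → Matrix ι ι ℝ}
    (hf : Continuous f) (hsymm : ∀ x, (f x).IsHermitian) : IsOpen {x | (f x).PosDef} := by
  refine isOpen_iff_eventually.mpr fun x hx => ?_
  have hq : Continuous fun z : X × (ι → ℝ) => z.2 ⬝ᵥ f z.1 *ᵥ z.2 := by fun_prop
  have hsphere := (isCompact_sphere (0 : ι → ℝ) 1).eventually_forall_of_forall_eventually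
    (P := fun y v => 0 < v ⬝ᵥ f y *ᵥ v) fun v hv => hq.continuousAt.eventually <| lt_mem_nhds <| by
      simpa using hx.dotProduct_mulVec_pos (ne_zero_of_mem_sphere one_ne_zero ⟨v, hv⟩)
  filter_upwards [hsphere] with y hy
  exact posDef_of_forall_mem_sphere (hsymm y) hy

variable [DecidableEq ι]

theorem Matrix.isClosed_setOf_posDef {X : Type*} [TopologicalSpace X] {f : X → Matrix ι ι ℝ}
    (hf : Continuous f) (hsymm : ∀ x, (f x).IsHermitian) (hunit : ∀ x, IsUnit (f x)) :
    IsClosed {x | (f x).PosDef} := by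
  have hPSD : {x | (f x).PosDef} = ⋂ v : ι → ℝ, {x | 0 ≤ v ⬝ᵥ f x *ᵥ v} := by
    ext x
    simp only [Set.mem_ofPred_eq, Set.mem_iInter]
    refine ⟨fun h v => by simpa using h.posSemidef.dotProduct_mulVec_nonneg v, fun h => ?_⟩
    refine (PosSemidef.posDef_iff_isUnit ?_).mpr (hunit x)
    exact .of_dotProduct_mulVec_nonneg (hsymm x) fun v => by simpa using h v
  rw [hPSD]
  exact isClosed_iInter fun v => isClosed_le continuous_const (by fun_prop)

theorem Matrix.posDef_of_continuous_of_isUnit {X : Type*} [TopologicalSpace X]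
    [PreconnectedSpace X] {f : X → Matrix ι ι ℝ} (hf : Continuous f)
    (hsymm : ∀ x, (f x).IsHermitian) (hunit : ∀ x, IsUnit (f x)) {x₀ : X} (h₀ : (f x₀).PosDef)
    (x : X) : (f x).PosDef := by
  have := IsClopen.eq_univ ⟨isClosed_setOf_posDef hf hsymm hunit, isOpen_setOf_posDef hf hsymm⟩
    ⟨x₀, h₀⟩
  exact Set.eq_univ_iff_forall.mp this x

noncomputable def lyapunovMap : Matrix ι ι ℝ →ₗ[ℝ] Module.End ℝ (Matrix ι ι ℝ) :=
  LinearMap.mul ℝ _ + (LinearMap.mul ℝ _).flip ∘ₗ (transposeLinearEquiv ι ι ℝ ℝ).toLinearMap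

@[simp]
theorem lyapunovMap_apply (A X : Matrix ι ι ℝ) : lyapunovMap A X = A * X + X * Aᵀ := rfl

/-- Junk unless `lyapunovMap A` is injective. -/
noncomputable def lyapunovSolution (A Q : Matrix ι ι ℝ) : Matrix ι ι ℝ :=
  let b := stdBasis ℝ ι ι
  toLin b b (LinearMap.toMatrix b b (lyapunovMap A))⁻¹ (-Q)

theorem isUnit_det_toMatrix_lyapunovMap {A : Matrix ι ι ℝ}
    (hA : Function.Injective (lyapunovMap A)) :
    IsUnit (LinearMap.toMatrix (stdBasis ℝ ι ι) (stdBasis ℝ ι ι) (lyapunovMap A)).det := by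
  rw [LinearMap.det_toMatrix, ← LinearMap.isUnit_iff_isUnit_det, Module.End.isUnit_iff]
  exact ⟨hA, LinearMap.injective_iff_surjective.mp hA⟩

theorem lyapunov_lyapunovSolution {A : Matrix ι ι ℝ} (hA : Function.Injective (lyapunovMap A))
    (Q : Matrix ι ι ℝ) :
    A * lyapunovSolution A Q + lyapunovSolution A Q * Aᵀ = -Q := by
  set b := stdBasis ℝ ι ι
  set K := LinearMap.toMatrix b b (lyapunovMap A)
  calc lyapunovMap A (toLin b b K⁻¹ (-Q)) = toLin b b K (toLin b b K⁻¹ (-Q)) := by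
        rw [toLin_toMatrix]
    _ = -Q := by
        rw [← LinearMap.comp_apply, ← toLin_mul, mul_nonsing_inv _
          (isUnit_det_toMatrix_lyapunovMap hA), toLin_one, LinearMap.id_apply]

theorem lyapunovSolution_eq {A : Matrix ι ι ℝ} (hA : Function.Injective (lyapunovMap A))
    {P Q : Matrix ι ι ℝ} (hP : A * P + P * Aᵀ = -Q) : lyapunovSolution A Q = P :=
  hA (by rw [lyapunovMap_apply, lyapunovMap_apply, lyapunov_lyapunovSolution hA, hP])

theorem isHermitian_lyapunovSolution {A : Matrix ι ι ℝ} (hA : Function.Injective (lyapunovMap A))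
    {Q : Matrix ι ι ℝ} (hQ : Q.IsHermitian) : (lyapunovSolution A Q).IsHermitian := by
  rw [isHermitian_iff_isSymm] at hQ ⊢
  have h := congrArg transpose (lyapunov_lyapunovSolution hA Q)
  rw [transpose_add, transpose_mul, transpose_mul, transpose_transpose, transpose_neg, hQ.eq,
    add_comm] at h
  exact (lyapunovSolution_eq hA h).symm

theorem continuousAt_lyapunovSolution {A : Matrix ι ι ℝ} (hA : Function.Injective (lyapunovMap A))
    (Q : Matrix ι ι ℝ) : ContinuousAt (lyapunovSolution · Q) A := by
  set b := stdBasis ℝ ι ι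
  have hK : Continuous fun A : Matrix ι ι ℝ => LinearMap.toMatrix b b (lyapunovMap A) :=
    LinearMap.continuous_of_finiteDimensional ((LinearMap.toMatrix b b).toLinearMap ∘ₗ lyapunovMap)
  have hinv := continuousAt_matrix_inv (LinearMap.toMatrix b b (lyapunovMap A))
    (NormedRing.inverse_continuousAt (isUnit_det_toMatrix_lyapunovMap hA).unit)
  have happ : Continuous fun M : Matrix (ι × ι) (ι × ι) ℝ => toLin b b M (-Q) :=
    LinearMap.continuous_of_finiteDimensional (LinearMap.applyₗ (-Q) ∘ₗ (toLin b b).toLinearMap)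
  exact happ.continuousAt.comp (hinv.comp (f := fun A => LinearMap.toMatrix b b (lyapunovMap A))
    hK.continuousAt)

theorem isUnit_of_lyapunov {A P Q : Matrix ι ι ℝ} (hP : P.IsHermitian) (hQ : Q.PosDef)
    (h : A * P + P * Aᵀ = -Q) : IsUnit P := by
  rw [isUnit_iff_isUnit_det, isUnit_iff_ne_zero]
  intro hdet
  obtain ⟨v, hv, hPv⟩ := exists_mulVec_eq_zero_iff.mpr hdet
  have hvP : v ᵥ* P = 0 := by
    rw [← (isHermitian_iff_isSymm.mp hP).eq, vecMul_transpose, hPv]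
  have hq := congrArg (v ⬝ᵥ · *ᵥ v) h
  simp only [add_mulVec, ← mulVec_mulVec, hPv, mulVec_zero, dotProduct_mulVec v P, hvP,
    zero_dotProduct, neg_mulVec, dotProduct_neg, zero_add] at hq
  have := hQ.dotProduct_mulVec_pos hv
  simp only [star_trivial] at this
  linarith

end RealMatrix

section Hurwitz

variable {n : ℕ}

theorem isHurwitz_of_lyapunov {A P Q : Matrix (Fin n) (Fin n) ℝ} (hP : P.PosDef) (hQ : Q.PosDef)
    (h : A * P + P * Aᵀ = -Q) : IsHurwitz A := by
  intro μ hμ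
  set Aℂ := A.map Complex.ofReal
  obtain ⟨w, hw, hwA⟩ := exists_vecMul_eq_smul_of_mem_spectrum hμ
  set x := star w
  have hx : x ≠ 0 := by simpa [x] using hw
  have hleft : star x ᵥ* Aℂ = μ • star x := by rwa [star_star]
  have hright : Aℂᵀ *ᵥ x = star μ • x := by
    have hAℂ : Aℂᵀ = Aℂᴴ := by ext; simp [Aℂ]
    rw [hAℂ, ← star_vecMul, hwA, star_smul]
  have hC : Aℂ * P.map Complex.ofReal + P.map Complex.ofReal * Aℂᵀ = -Q.map Complex.ofReal := by
    rw [← map_ofReal_mul_add_mul_transpose, h, Matrix.map_neg _ Complex.ofReal_neg]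
  have hform := congrArg (star x ⬝ᵥ · *ᵥ x) hC
  simp only [add_mulVec, ← mulVec_mulVec, dotProduct_add, dotProduct_mulVec (star x) Aℂ, hleft,
    hright, neg_mulVec, dotProduct_neg, smul_dotProduct, mulVec_smul, dotProduct_smul] at hform
  have hre := congrArg Complex.re hform
  simp only [smul_eq_mul, Complex.add_re, Complex.mul_re, Complex.star_def, Complex.conj_re,
    Complex.conj_im, Complex.neg_re] at hre
  nlinarith [hP.re_star_dotProduct_map_ofReal_mulVec_pos hx,
    hQ.re_star_dotProduct_map_ofReal_mulVec_pos hx]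

theorem IsHurwitz.lyapunovMap_injective {A : Matrix (Fin n) (Fin n) ℝ} (hA : IsHurwitz A) :
    Function.Injective (lyapunovMap A) := by
  refine (injective_iff_map_eq_zero _).mpr fun X hX => ?_
  have hC := map_ofReal_mul_add_mul_transpose A X
  rw [← lyapunovMap_apply, hX, Matrix.map_zero _ Complex.ofReal_zero, eq_comm] at hC
  refine map_injective Complex.ofReal_injective <|
    (eq_zero_of_mul_add_mul_eq_zero (fun μ hμ hμ' => ?_) hC).trans
      (Matrix.map_zero _ Complex.ofReal_zero).symm
  rw [mem_spectrum_iff_isRoot_charpoly, charpoly_transpose, ← mem_spectrum_iff_isRoot_charpoly]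
    at hμ'
  linarith [hA μ hμ, hA _ hμ', Complex.neg_re μ]

theorem IsHurwitz.one_sub_smul_sub_half_smul_one {A : Matrix (Fin n) (Fin n) ℝ}
    (hA : IsHurwitz A) {θ : ℝ} (hθ : θ ∈ Set.Icc (0 : ℝ) 1) :
    IsHurwitz ((1 - θ) • A - (θ / 2) • 1) := by
  rcases hθ.2.lt_or_eq with hθ1 | rfl
  · intro μ hμ
    have hθ0 : ((1 - θ : ℝ) : ℂ) ≠ 0 := by exact_mod_cast (sub_pos.mpr hθ1).ne'
    set u := Units.mk0 _ hθ0
    have hmap : ((1 - θ) • A - (θ / 2) • 1).map Complex.ofReal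
        = -algebraMap ℂ _ ((θ / 2 : ℝ) : ℂ) + u • A.map Complex.ofReal := by
      ext i j
      by_cases hij : i = j
      · simp [u, Algebra.algebraMap_eq_smul_one, hij]
        ring
      · simp [u, Algebra.algebraMap_eq_smul_one, hij]
    rw [hmap, ← spectrum.add_mem_iff, ← mul_inv_cancel_left₀ hθ0 (μ + _), ← smul_eq_mul,
      ← Units.val_mk0 hθ0, ← Units.smul_def, spectrum.smul_mem_smul_iff] at hμ
    have hre := hA _ hμ
    rw [Units.val_mk0, ← Complex.ofReal_inv, Complex.re_ofReal_mul, Complex.add_re,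
      Complex.ofReal_re] at hre
    linarith [neg_of_mul_neg_right hre (inv_nonneg.mpr (sub_pos.mpr hθ1).le), hθ.1]
  · refine isHurwitz_of_lyapunov PosDef.one PosDef.one ?_
    simp only [sub_self, zero_smul, zero_sub, transpose_neg, transpose_smul, transpose_one,
      mul_one, one_mul]
    module

theorem IsHurwitz.exists_posDef_lyapunov {A Q : Matrix (Fin n) (Fin n) ℝ} (hA : IsHurwitz A)
    (hQ : Q.PosDef) : ∃ P : Matrix (Fin n) (Fin n) ℝ, P.PosDef ∧ A * P + P * Aᵀ = -Q := by
  set γ : unitInterval → Matrix (Fin n) (Fin n) ℝ := fun θ => (1 - (θ : ℝ)) • A - ((θ : ℝ) / 2) • 1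
  have hγ (θ : unitInterval) : Function.Injective (lyapunovMap (γ θ)) :=
    (hA.one_sub_smul_sub_half_smul_one θ.2).lyapunovMap_injective
  set P := fun θ => lyapunovSolution (γ θ) Q
  have hP (θ : unitInterval) : γ θ * P θ + P θ * (γ θ)ᵀ = -Q := lyapunov_lyapunovSolution (hγ θ) Q
  have hcont : Continuous P := continuous_iff_continuousAt.mpr fun θ =>
    (continuousAt_lyapunovSolution (hγ θ) Q).comp (by fun_prop : Continuous γ).continuousAt
  have hsymm (θ : unitInterval) : (P θ).IsHermitian :=
    isHermitian_lyapunovSolution (hγ θ) hQ.isHermitian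
  have hunit (θ : unitInterval) : IsUnit (P θ) := isUnit_of_lyapunov (hsymm θ) hQ (hP θ)
  have hP₁ : P 1 = Q := lyapunovSolution_eq (hγ 1) (by simp [γ]; module)
  refine ⟨P 0, posDef_of_continuous_of_isUnit hcont hsymm hunit (x₀ := 1) (hP₁ ▸ hQ) 0, ?_⟩
  simpa [γ] using hP 0

end Hurwitz

theorem lyapunov_iff_transpose_eq_neg {ι : Type*} [Fintype ι] {A P Q : Matrix ι ι ℝ}
    (hP : P.IsHermitian) (hQ : Q.IsHermitian) :
    A * P + P * Aᵀ = -Q ↔ (A * P + (1 / 2 : ℝ) • Q)ᵀ = -(A * P + (1 / 2 : ℝ) • Q) := by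
  rw [transpose_add, transpose_smul, (isHermitian_iff_isSymm.mp hQ).eq, transpose_mul,
    (isHermitian_iff_isSymm.mp hP).eq]
  constructor <;> intro h <;> linear_combination (norm := module) h

theorem neg_half_smul_add_mul_inv_eq_iff {ι : Type*} [Fintype ι] [DecidableEq ι]
    {A P S Q : Matrix ι ι ℝ} (hP : IsUnit P) :
    ((-(1 / 2 : ℝ)) • Q + S) * P⁻¹ = A ↔ S = A * P + (1 / 2 : ℝ) • Q := by
  rw [isUnit_iff_isUnit_det] at hP
  constructor
  · rintro rfl
    rw [mul_assoc, nonsing_inv_mul _ hP, mul_one]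
    module
  · rintro rfl
    rw [show (-(1 / 2 : ℝ)) • Q + (A * P + (1 / 2 : ℝ) • Q) = A * P by module, mul_assoc,
      mul_nonsing_inv _ hP, mul_one]

theorem stmt2 {n : ℕ} (Sw : Matrix (Fin n) (Fin n) ℝ) (hSw : Sw.PosDef) :
    Set.BijOn
      (fun p : Matrix (Fin n) (Fin n) ℝ × Matrix (Fin n) (Fin n) ℝ =>
        ((-(1/2 : ℝ)) • Sw + p.2) * (p.1)⁻¹)
      {p | p.1.PosDef ∧ p.2ᵀ = -p.2}
      {A | IsHurwitz A} := by
  have hf {P S A : Matrix (Fin n) (Fin n) ℝ} (hP : P.PosDef) :=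
    neg_half_smul_add_mul_inv_eq_iff (A := A) (S := S) (Q := Sw) hP.isUnit
  have hlyap {P A : Matrix (Fin n) (Fin n) ℝ} (hP : P.PosDef) :=
    lyapunov_iff_transpose_eq_neg (A := A) hP.isHermitian hSw.isHermitian
  refine ⟨?_, ?_, ?_⟩
  · rintro ⟨P, S⟩ ⟨hP, hS⟩
    exact isHurwitz_of_lyapunov hP hSw ((hlyap hP).mpr ((hf hP).mp rfl ▸ hS))
  · rintro ⟨P₁, S₁⟩ ⟨hP₁ : P₁.PosDef, hS₁ : S₁ᵀ = -S₁⟩ ⟨P₂, S₂⟩ ⟨hP₂ : P₂.PosDef, hS₂ : S₂ᵀ = -S₂⟩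
      (hA : ((-(1/2 : ℝ)) • Sw + S₁) * P₁⁻¹ = ((-(1/2 : ℝ)) • Sw + S₂) * P₂⁻¹)
    set A := ((-(1/2 : ℝ)) • Sw + S₂) * P₂⁻¹
    have e₁ := (hf hP₁).mp hA
    have e₂ := (hf (A := A) hP₂).mp rfl
    have h₂ := (hlyap hP₂).mpr (e₂ ▸ hS₂)
    have hP : P₁ = P₂ := (isHurwitz_of_lyapunov hP₂ hSw h₂).lyapunovMap_injective <| by
      rw [lyapunovMap_apply, lyapunovMap_apply, (hlyap hP₁).mpr (e₁ ▸ hS₁), h₂]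
    exact Prod.ext hP (by rw [e₁, e₂, hP])
  · intro A hA
    obtain ⟨P, hP, hL⟩ := hA.exists_posDef_lyapunov hSw
    exact ⟨(P, A * P + (1/2 : ℝ) • Sw), ⟨hP, (hlyap hP).mp hL⟩, (hf hP).mpr rfl⟩
end

section
/- With A, P, M as in the parametrization A = (-(1/2)Σ_w + αS̄)Σ⁻¹, P = -(1/4)(Σ_wΣ⁻¹ + Σ⁻¹Σ_w), M = (1/2)(S̄Σ⁻¹ - Σ⁻¹S̄), the numerical abscissa ω(A) = λ_max((A+Aᵀ)/2) satisfies λ_min(P) + α λ_max(M) ≤ ω(A) ≤ λ_max(P) + α λ_max(M) for all α ≥ 0. -/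
/-!
The symmetric part of `A` is `P + α • M`, because `Σ_w` and `Σ⁻¹` are symmetric and `S̄` is
skew. Both bounds are then Weyl's inequalities
`λ_min(H) + λ_max(K) ≤ λ_max(H + K) ≤ λ_max(H) + λ_max(K)` with `K = α • M`, together with
`λ_max(α • M) = α λ_max(M)` for `α ≥ 0`. Weyl's inequalities come from the Rayleigh bounds
`λ_min(H) ‖x‖² ≤ re ⟪x, H x⟫ ≤ λ_max(H) ‖x‖²`, evaluated at a unit eigenvector for the top
eigenvalue of the matrix on the larger side.
-/

open Matrix
open scoped InnerProductSpace

namespace Matrix.IsHermitian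

variable {𝕜 ι : Type*} [RCLike 𝕜] [Fintype ι] [DecidableEq ι] {H K : Matrix ι ι 𝕜}

lemma toEuclideanLin_eigenvectorBasis (hH : H.IsHermitian) (i : ι) :
    toEuclideanLin H (hH.eigenvectorBasis i) = hH.eigenvalues i • hH.eigenvectorBasis i := by
  ext1
  rw [toLpLin_apply, hH.mulVec_eigenvectorBasis]
  rfl

lemma re_inner_toEuclideanLin_self (hH : H.IsHermitian) (x : EuclideanSpace 𝕜 ι) :
    RCLike.re ⟪x, toEuclideanLin H x⟫_𝕜 =
      ∑ i, hH.eigenvalues i * ‖⟪hH.eigenvectorBasis i, x⟫_𝕜‖ ^ 2 := by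
  rw [← hH.eigenvectorBasis.sum_inner_mul_inner, map_sum]
  refine Finset.sum_congr rfl fun i _ => ?_
  rw [← isSymmetric_toEuclideanLin_iff.2 hH, toEuclideanLin_eigenvectorBasis,
    inner_smul_left_eq_smul, RCLike.real_smul_eq_coe_mul, ← inner_conj_symm x, mul_left_comm,
    RCLike.conj_mul]
  norm_cast

lemma iInf_eigenvalues_mul_le (hH : H.IsHermitian) (x : EuclideanSpace 𝕜 ι) :
    (⨅ i, hH.eigenvalues i) * ‖x‖ ^ 2 ≤ RCLike.re ⟪x, toEuclideanLin H x⟫_𝕜 := by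
  rw [re_inner_toEuclideanLin_self hH, ← hH.eigenvectorBasis.sum_sq_norm_inner_right,
    Finset.mul_sum]
  gcongr with i
  exact ciInf_le (Set.finite_range _).bddBelow i

lemma re_inner_le_iSup_eigenvalues_mul (hH : H.IsHermitian) (x : EuclideanSpace 𝕜 ι) :
    RCLike.re ⟪x, toEuclideanLin H x⟫_𝕜 ≤ (⨆ i, hH.eigenvalues i) * ‖x‖ ^ 2 := by
  rw [re_inner_toEuclideanLin_self hH, ← hH.eigenvectorBasis.sum_sq_norm_inner_right,
    Finset.mul_sum]
  gcongr with i
  exact le_ciSup (Set.finite_range _).bddAbove i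

lemma re_inner_toEuclideanLin_eigenvectorBasis (hH : H.IsHermitian) (i : ι) :
    RCLike.re ⟪hH.eigenvectorBasis i, toEuclideanLin H (hH.eigenvectorBasis i)⟫_𝕜 =
      hH.eigenvalues i := by
  simp [toEuclideanLin_eigenvectorBasis, inner_smul_right_eq_smul, RCLike.smul_re]

lemma exists_norm_eq_one_re_inner_eq_iSup [Nonempty ι] (hH : H.IsHermitian) :
    ∃ x : EuclideanSpace 𝕜 ι, ‖x‖ = 1 ∧
      RCLike.re ⟪x, toEuclideanLin H x⟫_𝕜 = ⨆ i, hH.eigenvalues i := by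
  obtain ⟨i, hi⟩ := exists_eq_ciSup_of_finite (f := hH.eigenvalues)
  exact ⟨_, hH.eigenvectorBasis.orthonormal.1 i,
    (re_inner_toEuclideanLin_eigenvectorBasis hH i).trans hi⟩

theorem iSup_eigenvalues_add_le (hH : H.IsHermitian) (hK : K.IsHermitian)
    (hHK : (H + K).IsHermitian) :
    ⨆ i, hHK.eigenvalues i ≤ (⨆ i, hH.eigenvalues i) + ⨆ i, hK.eigenvalues i := by
  cases isEmpty_or_nonempty ι
  · simp [Real.iSup_of_isEmpty]
  obtain ⟨x, hx, hxHK⟩ := exists_norm_eq_one_re_inner_eq_iSup (𝕜 := 𝕜) hHK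
  have hxH := re_inner_le_iSup_eigenvalues_mul hH x
  have hxK := re_inner_le_iSup_eigenvalues_mul hK x
  rw [← hxHK, map_add, LinearMap.add_apply, inner_add_right, map_add]
  rw [hx] at hxH hxK
  linarith

theorem iInf_add_iSup_eigenvalues_le (hH : H.IsHermitian) (hK : K.IsHermitian)
    (hHK : (H + K).IsHermitian) :
    (⨅ i, hH.eigenvalues i) + ⨆ i, hK.eigenvalues i ≤ ⨆ i, hHK.eigenvalues i := by
  cases isEmpty_or_nonempty ι
  · simp [Real.iSup_of_isEmpty, Real.iInf_of_isEmpty]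
  obtain ⟨x, hx, hxK⟩ := exists_norm_eq_one_re_inner_eq_iSup (𝕜 := 𝕜) hK
  have hxH := iInf_eigenvalues_mul_le hH x
  have hxHK := re_inner_le_iSup_eigenvalues_mul hHK x
  rw [← hxK]
  rw [map_add, LinearMap.add_apply, inner_add_right, map_add] at hxHK
  rw [hx] at hxH hxHK
  linarith

lemma re_inner_toEuclideanLin_smul (c : ℝ) (x : EuclideanSpace 𝕜 ι) :
    RCLike.re ⟪x, toEuclideanLin (c • H) x⟫_𝕜 = c * RCLike.re ⟪x, toEuclideanLin H x⟫_𝕜 := by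
  simp [toLpLin_apply, smul_mulVec, inner_smul_right_eq_smul, RCLike.smul_re]

theorem iSup_eigenvalues_smul (hH : H.IsHermitian) {c : ℝ} (hcH : (c • H).IsHermitian)
    (hc : 0 ≤ c) : ⨆ i, hcH.eigenvalues i = c * ⨆ i, hH.eigenvalues i := by
  cases isEmpty_or_nonempty ι
  · simp [Real.iSup_of_isEmpty]
  obtain ⟨x, hx, hxcH⟩ := exists_norm_eq_one_re_inner_eq_iSup (𝕜 := 𝕜) hcH
  obtain ⟨y, hy, hyH⟩ := exists_norm_eq_one_re_inner_eq_iSup (𝕜 := 𝕜) hH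
  apply le_antisymm
  · have hxH := re_inner_le_iSup_eigenvalues_mul hH x
    rw [← hxcH, re_inner_toEuclideanLin_smul]
    simpa [hx] using mul_le_mul_of_nonneg_left hxH hc
  · have hycH := re_inner_le_iSup_eigenvalues_mul hcH y
    rw [← hyH, ← re_inner_toEuclideanLin_smul]
    simpa [hy] using hycH

end Matrix.IsHermitian

theorem stmt9_general {n : ℕ} (Sw Sig Sb : Matrix (Fin n) (Fin n) ℝ) (α : ℝ) (hα : 0 ≤ α)
    (hSw : Sw.PosDef) (hSig : Sig.PosDef) (hSb : Sbᵀ = -Sb)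
    (A P M : Matrix (Fin n) (Fin n) ℝ)
    (hA : A = ((-(1/2 : ℝ)) • Sw + α • Sb) * Sig⁻¹)
    (hP : P = (-(1/4 : ℝ)) • (Sw * Sig⁻¹ + Sig⁻¹ * Sw))
    (hM : M = (1/2 : ℝ) • (Sb * Sig⁻¹ - Sig⁻¹ * Sb))
    (hHA : ((1/2 : ℝ) • (A + Aᵀ)).IsHermitian)
    (hHP : P.IsHermitian) (hHM : M.IsHermitian) :
    (⨅ i, hHP.eigenvalues i) + α * (⨆ i, hHM.eigenvalues i) ≤ (⨆ i, hHA.eigenvalues i) ∧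
    (⨆ i, hHA.eigenvalues i) ≤ (⨆ i, hHP.eigenvalues i) + α * (⨆ i, hHM.eigenvalues i) := by
  have hSwT : Swᵀ = Sw := hSw.isHermitian.eq
  have hSigT : Sigᵀ = Sig := hSig.isHermitian.eq
  have hsymm : (1/2 : ℝ) • (A + Aᵀ) = P + α • M := by
    subst hA hP hM
    simp only [transpose_mul, transpose_add, transpose_smul, transpose_nonsing_inv, hSwT, hSigT,
      hSb, smul_neg, Matrix.add_mul, Matrix.mul_neg, Matrix.smul_mul]
    module
  revert hHA
  rw [hsymm]
  intro hHA
  have hHαM : (α • M).IsHermitian := hHM.smul (IsSelfAdjoint.all α)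
  rw [← hHM.iSup_eigenvalues_smul hHαM hα]
  exact ⟨hHP.iInf_add_iSup_eigenvalues_le hHαM hHA, hHP.iSup_eigenvalues_add_le hHαM hHA⟩

theorem stmt9 {n : ℕ} (Sw Sig Sb : Matrix (Fin n) (Fin n) ℝ) (α : ℝ) (hα : 0 ≤ α)
    (hSw : Sw.PosDef) (hSig : Sig.PosDef) (hSb : Sbᵀ = -Sb) (hSb0 : Sb ≠ 0)
    (A P M : Matrix (Fin n) (Fin n) ℝ)
    (hA : A = ((-(1/2 : ℝ)) • Sw + α • Sb) * Sig⁻¹)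
    (hP : P = (-(1/4 : ℝ)) • (Sw * Sig⁻¹ + Sig⁻¹ * Sw))
    (hM : M = (1/2 : ℝ) • (Sb * Sig⁻¹ - Sig⁻¹ * Sb))
    (hHA : ((1/2 : ℝ) • (A + Aᵀ)).IsHermitian)
    (hHP : P.IsHermitian) (hHM : M.IsHermitian) :
    (⨅ i, hHP.eigenvalues i) + α * (⨆ i, hHM.eigenvalues i) ≤ (⨆ i, hHA.eigenvalues i) ∧
    (⨆ i, hHA.eigenvalues i) ≤ (⨆ i, hHP.eigenvalues i) + α * (⨆ i, hHM.eigenvalues i) :=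
  stmt9_general Sw Sig Sb α hα hSw hSig hSb A P M hA hP hM hHA hHP hHM
end

section
/- With F(0, α) = (1/4)Σ⁻¹Σ_wΣ⁻¹ + α²Σ⁻¹S̄ᵀΣ_w⁻¹S̄Σ⁻¹, where Σ_w, Σ are symmetric positive definite and S̄ is skew-symmetric nonzero: for every α > 0, F(0,α) ⪰ F(0,0) ≻ 0 and trace(F(0,α)) > trace(F(0,0)), and consequently trace(F(0,0)⁻¹) > trace(F(0,α)⁻¹). -/
/-!
Write `X = S̄ Σ⁻¹`. Then `F(0, α) = F(0, 0) + α² Xᴴ Σ_w⁻¹ X`, and the increment is positive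
semidefinite and nonzero because `Σ_w⁻¹` is positive definite and `X ≠ 0`; so the trace strictly
increases. For the inverses, two applications of the resolvent identity give, with `C = A + B`,
`A⁻¹ - C⁻¹ = C⁻¹ B C⁻¹ + (B C⁻¹)ᴴ A⁻¹ (B C⁻¹)`: a nonzero positive semidefinite matrix plus a
positive semidefinite one, hence of positive trace.
-/

open Matrix

namespace Matrix

open scoped ComplexOrder

variable {m n 𝕜 : Type*} [Fintype m] [Fintype n] [RCLike 𝕜]

theorem PosSemidef.trace_pos_of_ne_zero {A : Matrix n n 𝕜} (hA : A.PosSemidef) (h : A ≠ 0) :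
    0 < A.trace :=
  hA.trace_nonneg.lt_of_ne' (mt hA.trace_eq_zero_iff.mp h)

theorem PosDef.conjTranspose_mul_mul_same_ne_zero [DecidableEq m] {A : Matrix n n 𝕜}
    (hA : A.PosDef) {X : Matrix n m 𝕜} (hX : X ≠ 0) : Xᴴ * A * X ≠ 0 := by
  intro h
  refine hX (ext_of_mulVec_single fun j => ?_)
  by_contra hv
  have := hA.dotProduct_mulVec_pos (x := X *ᵥ Pi.single j 1) (by rwa [zero_mulVec] at hv)
  rw [star_mulVec, ← dotProduct_mulVec, mulVec_mulVec, mulVec_mulVec, h] at this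
  simp at this

theorem conjTranspose_mul_mul_same_ne_zero_of_isUnit [DecidableEq n] {A X : Matrix n n 𝕜}
    (hA : A ≠ 0) (hX : IsUnit X) : Xᴴ * A * X ≠ 0 := by
  rwa [Ne, IsUnit.mul_left_eq_zero hX, IsUnit.mul_right_eq_zero ((isUnit_conjTranspose _).mpr hX)]

theorem inv_sub_inv_add [DecidableEq n] {R : Type*} [CommRing R] {A B : Matrix n n R}
    (hA : IsUnit A) (hAB : IsUnit (A + B)) :
    A⁻¹ - (A + B)⁻¹ = (A + B)⁻¹ * B * (A + B)⁻¹ + (A + B)⁻¹ * B * A⁻¹ * B * (A + B)⁻¹ := by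
  have h₁ := inv_sub_inv (iff_of_true hA hAB)
  have h₂ := inv_sub_inv (iff_of_true hAB hA)
  rw [add_sub_cancel_left] at h₁
  rw [sub_add_cancel_left, mul_neg, neg_mul, ← neg_sub, neg_inj] at h₂
  calc A⁻¹ - (A + B)⁻¹ = A⁻¹ * B * (A + B)⁻¹ := h₁
    _ = ((A + B)⁻¹ + (A + B)⁻¹ * B * A⁻¹) * B * (A + B)⁻¹ := by rw [← eq_add_of_sub_eq' h₂]
    _ = _ := by simp only [add_mul]

theorem PosDef.trace_inv_add_lt [DecidableEq n] {A B : Matrix n n 𝕜} (hA : A.PosDef)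
    (hB : B.PosSemidef) (hB0 : B ≠ 0) : ((A + B)⁻¹).trace < A⁻¹.trace := by
  have hC := hA.add_posSemidef hB
  have hCi : ((A + B)⁻¹)ᴴ = (A + B)⁻¹ := hC.inv.isHermitian
  have h₁ : 0 < ((A + B)⁻¹ * B * (A + B)⁻¹).trace := by
    have := (hB.conjTranspose_mul_mul_same _).trace_pos_of_ne_zero
      (conjTranspose_mul_mul_same_ne_zero_of_isUnit hB0 hC.inv.isUnit)
    rwa [hCi] at this
  have h₂ : 0 ≤ ((A + B)⁻¹ * B * A⁻¹ * B * (A + B)⁻¹).trace := by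
    have := (hA.inv.posSemidef.conjTranspose_mul_mul_same (B * (A + B)⁻¹)).trace_nonneg
    simpa only [conjTranspose_mul, hCi, hB.isHermitian.eq, Matrix.mul_assoc] using this
  rw [← sub_pos, ← trace_sub, inv_sub_inv_add hA.isUnit hC.isUnit, trace_add]
  exact add_pos_of_pos_of_nonneg h₁ h₂

end Matrix

theorem stmt18_general {n : ℕ} (Sw Sig Sb : Matrix (Fin n) (Fin n) ℝ)
    (hSw : Sw.PosDef) (hSig : Sig.PosDef) (hSb0 : Sb ≠ 0)
    (F : ℝ → Matrix (Fin n) (Fin n) ℝ)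
    (hF : ∀ α, F α = (1/4 : ℝ) • (Sig⁻¹ * Sw * Sig⁻¹) +
      (α^2) • (Sig⁻¹ * Sbᵀ * Sw⁻¹ * Sb * Sig⁻¹))
    (α : ℝ) (hα : 0 < α) :
    (F α - F 0).PosSemidef ∧ (F 0).PosDef ∧
    (F 0).trace < (F α).trace ∧
    ((F α)⁻¹).trace < ((F 0)⁻¹).trace := by
  have hSigInv : (Sig⁻¹)ᴴ = Sig⁻¹ := hSig.inv.isHermitian
  set X := Sb * Sig⁻¹
  have hX : X ≠ 0 := (IsUnit.mul_left_eq_zero hSig.inv.isUnit).not.mpr hSb0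
  have hF0 : F 0 = (1/4 : ℝ) • ((Sig⁻¹)ᴴ * Sw * Sig⁻¹) := by
    rw [hF, hSigInv]
    simp
  have hFα : F α = F 0 + α ^ 2 • (Xᴴ * Sw⁻¹ * X) := by
    rw [hF, hF0, hSigInv, conjTranspose_mul, hSigInv, conjTranspose_eq_transpose_of_trivial]
    simp only [X, Matrix.mul_assoc]
  have hA : (F 0).PosDef := hF0 ▸ (hSw.conjTranspose_mul_mul_same
    (mulVec_injective_iff_isUnit.mpr hSig.inv.isUnit)).smul (by norm_num)
  have hB : (α ^ 2 • (Xᴴ * Sw⁻¹ * X)).PosSemidef :=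
    (hSw.inv.posSemidef.conjTranspose_mul_mul_same X).smul (sq_nonneg α)
  have hB0 : α ^ 2 • (Xᴴ * Sw⁻¹ * X) ≠ 0 :=
    smul_ne_zero (pow_ne_zero 2 hα.ne') (hSw.inv.conjTranspose_mul_mul_same_ne_zero hX)
  rw [hFα, add_sub_cancel_left, trace_add]
  exact ⟨hB, hA, lt_add_of_pos_right _ (hB.trace_pos_of_ne_zero hB0),
    hA.trace_inv_add_lt hB hB0⟩

theorem stmt18 {n : ℕ} (Sw Sig Sb : Matrix (Fin n) (Fin n) ℝ)
    (hSw : Sw.PosDef) (hSig : Sig.PosDef) (hSb : Sbᵀ = -Sb) (hSb0 : Sb ≠ 0)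
    (F : ℝ → Matrix (Fin n) (Fin n) ℝ)
    (hF : ∀ α, F α = (1/4 : ℝ) • (Sig⁻¹ * Sw * Sig⁻¹) +
      (α^2) • (Sig⁻¹ * Sbᵀ * Sw⁻¹ * Sb * Sig⁻¹))
    (α : ℝ) (hα : 0 < α) :
    (F α - F 0).PosSemidef ∧ (F 0).PosDef ∧
    (F 0).trace < (F α).trace ∧
    ((F α)⁻¹).trace < ((F 0)⁻¹).trace :=
  stmt18_general Sw Sig Sb hSw hSig hSb0 F hF α hα
end

section
/- Suppose S̄ is a full-rank real skew-symmetric n×n matrix and Σ_w, Σ are symmetric positive definite. With c̃ = λ_min(Σ⁻¹S̄ᵀΣ_w⁻¹S̄Σ⁻¹), b̃ = λ_min(Σ_w⁻¹), d̃ = ‖Σ⁻¹S̄Σ_w⁻¹‖, fix ω̄ > 0 and let ᾱ = 4(d̃/b̃)ω̄/(c̃/b̃). Then for all |ω| ≤ ω̄ and α ≥ ᾱ, the Hermitian matrix F(iω, α) = (iωI - A_α)*Σ_w⁻¹(iωI - A_α) satisfies F(iω,α) ⪰ [λ_min(Σ⁻¹Σ_wΣ⁻¹)/4 + b̃ α²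 (c̃/b̃)/2] I, and hence trace(F(iω,α)⁻¹) → 0 as α → ∞ uniformly on |ω| ≤ ω̄. -/
open Matrix
open scoped ComplexOrder

/-- The Hermitian matrix `F(iω, α) = (iω I - A_α)* Σ_w⁻¹ (iω I - A_α)`, where
`A_α = (-(1/2)Σ_w + α S̄)Σ⁻¹`. -/
noncomputable def Fmat {n : ℕ} (Sw Sig Sb : Matrix (Fin n) (Fin n) ℝ) (ω α : ℝ) :
    Matrix (Fin n) (Fin n) ℂ :=
  ((((ω : ℂ) * Complex.I) • (1 : Matrix (Fin n) (Fin n) ℂ) -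
      (((-(1/2 : ℝ)) • Sw + α • Sb) * Sig⁻¹).map Complex.ofReal)ᴴ) *
    ((Sw⁻¹).map Complex.ofReal) *
    (((ω : ℂ) * Complex.I) • (1 : Matrix (Fin n) (Fin n) ℂ) -
      (((-(1/2 : ℝ)) • Sw + α • Sb) * Sig⁻¹).map Complex.ofReal)

section Helpers

variable {n : ℕ}

/-- Decomposition of a complex quadratic form of a real matrix into real and imaginary parts. -/
lemma quad_decomp (P : Matrix (Fin n) (Fin n) ℝ) (x : Fin n → ℂ) :
    star x ⬝ᵥ ((P.map (Complex.ofReal)) *ᵥ x) =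
      Complex.ofReal ((fun j => (x j).re) ⬝ᵥ (P *ᵥ fun j => (x j).re)
        + (fun j => (x j).im) ⬝ᵥ (P *ᵥ fun j => (x j).im))
      + Complex.ofReal ((fun j => (x j).re) ⬝ᵥ (P *ᵥ fun j => (x j).im)
        - (fun j => (x j).im) ⬝ᵥ (P *ᵥ fun j => (x j).re)) * Complex.I := by
  simp only [dotProduct, mulVec, map_apply, Pi.star_apply, Finset.mul_sum]
  push_cast
  rw [Finset.sum_add_distrib.symm, ← Finset.sum_sub_distrib, Finset.sum_mul]
  rw [← Finset.sum_add_distrib]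
  refine Finset.sum_congr rfl fun j _ => ?_
  rw [Finset.sum_add_distrib.symm, ← Finset.sum_sub_distrib, Finset.sum_mul]
  rw [← Finset.sum_add_distrib]
  refine Finset.sum_congr rfl fun k _ => ?_
  apply Complex.ext <;> (simp [Complex.mul_re, Complex.mul_im]; try ring)

/-- `P - c•1` is PSD when `c` is below all eigenvalues. -/
lemma psd_sub_smul {P : Matrix (Fin n) (Fin n) ℝ} (hP : P.IsHermitian) {c : ℝ}
    (hc : ∀ i, c ≤ hP.eigenvalues i) : (P - c • 1).PosSemidef := by
  have hU := Matrix.mem_unitaryGroup_iff.mp hP.eigenvectorUnitary.2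
  have key : P - c • (1 : Matrix (Fin n) (Fin n) ℝ) =
      (hP.eigenvectorUnitary : Matrix (Fin n) (Fin n) ℝ) *
        Matrix.diagonal (fun i => hP.eigenvalues i - c) *
        (hP.eigenvectorUnitary : Matrix (Fin n) (Fin n) ℝ)ᴴ := by
    have h1 : Matrix.diagonal (fun i => hP.eigenvalues i - c)
        = Matrix.diagonal (RCLike.ofReal ∘ hP.eigenvalues) - c • 1 := by
      rw [Matrix.smul_one_eq_diagonal, ← Matrix.diagonal_sub]
      rfl
    rw [h1, Matrix.mul_sub, Matrix.sub_mul,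
      show (hP.eigenvectorUnitary : Matrix (Fin n) (Fin n) ℝ)ᴴ
        = star (hP.eigenvectorUnitary : Matrix (Fin n) (Fin n) ℝ) from rfl,
      ← (show P = (hP.eigenvectorUnitary : Matrix (Fin n) (Fin n) ℝ) *
          diagonal (RCLike.ofReal ∘ hP.eigenvalues) * star (hP.eigenvectorUnitary : Matrix (Fin n) (Fin n) ℝ)
          from hP.spectral_theorem)]
    congr 1
    rw [Matrix.mul_smul, Matrix.mul_one, Matrix.smul_mul, hU]
  rw [key]
  exact (Matrix.PosSemidef.diagonal (fun i => sub_nonneg.mpr (hc i))).mul_mul_conjTranspose_same _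

/-- Quadratic form lower bound from PSD of `P - c•1`. -/
lemma quad_lb {P : Matrix (Fin n) (Fin n) ℝ} {c : ℝ}
    (h : (P - c • 1).PosSemidef) (u : Fin n → ℝ) :
    c * (u ⬝ᵥ u) ≤ u ⬝ᵥ (P *ᵥ u) := by
  have := h.dotProduct_mulVec_nonneg u
  simp only [sub_mulVec, dotProduct_sub, star_trivial, smul_mulVec, one_mulVec,
    dotProduct_smul, smul_eq_mul] at this
  linarith

/-- Bilinear form bound via the operator norm. -/
lemma bilin_bound (G : Matrix (Fin n) (Fin n) ℝ) (u v : Fin n → ℝ) :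
    |u ⬝ᵥ (G *ᵥ v)| ≤ ‖toEuclideanCLM (𝕜 := ℝ) G‖ * Real.sqrt (u ⬝ᵥ u) * Real.sqrt (v ⬝ᵥ v) := by
  set u' : EuclideanSpace ℝ (Fin n) := (WithLp.equiv _ _).symm u
  set v' : EuclideanSpace ℝ (Fin n) := (WithLp.equiv _ _).symm v
  have h1 : u ⬝ᵥ (G *ᵥ v) = inner ℝ u' (toEuclideanCLM (𝕜 := ℝ) G v') := by
    show _ = inner ℝ (WithLp.toLp 2 u) (toEuclideanCLM (𝕜 := ℝ) G (WithLp.toLp 2 v))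
    rw [Matrix.toEuclideanCLM_toLp, EuclideanSpace.inner_toLp_toLp]
    rw [star_trivial, dotProduct_comm]
  have h2 : ‖u'‖ = Real.sqrt (u ⬝ᵥ u) := by
    rw [EuclideanSpace.norm_eq]
    congr 1
    simp [dotProduct, sq]
    rfl
  have h3 : ‖v'‖ = Real.sqrt (v ⬝ᵥ v) := by
    rw [EuclideanSpace.norm_eq]
    congr 1
    simp [dotProduct, sq]
    rfl
  calc |u ⬝ᵥ (G *ᵥ v)| = ‖inner ℝ u' (toEuclideanCLM (𝕜 := ℝ) G v')‖ := by
        rw [h1, Real.norm_eq_abs]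
    _ ≤ ‖u'‖ * ‖toEuclideanCLM (𝕜 := ℝ) G v'‖ := norm_inner_le_norm _ _
    _ ≤ ‖u'‖ * (‖toEuclideanCLM (𝕜 := ℝ) G‖ * ‖v'‖) :=
        mul_le_mul_of_nonneg_left ((toEuclideanCLM (𝕜 := ℝ) G).le_opNorm v') (norm_nonneg _)
    _ = ‖toEuclideanCLM (𝕜 := ℝ) G‖ * Real.sqrt (u ⬝ᵥ u) * Real.sqrt (v ⬝ᵥ v) := by
        rw [h2, h3]; ring

lemma Mt_eq (Sw Sig Sb : Matrix (Fin n) (Fin n) ℝ)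
    (hSw : Sw.PosDef) (hSig : Sig.PosDef) (hSb : Sbᵀ = -Sb) (α : ℝ) :
    (((-(1/2 : ℝ)) • Sw + α • Sb) * Sig⁻¹)ᵀ
      = Sig⁻¹ * ((-(1/2 : ℝ)) • Sw - α • Sb) := by
  have hSigi : (Sig⁻¹)ᵀ = Sig⁻¹ := by
    rw [Matrix.transpose_nonsing_inv]
    exact congrArg _ hSig.isHermitian.eq
  have hSwt : Swᵀ = Sw := hSw.isHermitian.eq
  rw [Matrix.transpose_mul, hSigi, Matrix.transpose_add, Matrix.transpose_smul,
    Matrix.transpose_smul, hSwt, hSb, smul_neg, ← sub_eq_add_neg]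

lemma identity1 (Sw Sig Sb : Matrix (Fin n) (Fin n) ℝ)
    (hSw : Sw.PosDef) (hSig : Sig.PosDef) (hSb : Sbᵀ = -Sb) (α : ℝ) :
    (((-(1/2 : ℝ)) • Sw + α • Sb) * Sig⁻¹)ᵀ * Sw⁻¹ * ((((-(1/2 : ℝ)) • Sw + α • Sb)) * Sig⁻¹)
      = (1/4 : ℝ) • (Sig⁻¹ * Sw * Sig⁻¹) + (α^2) • (Sig⁻¹ * Sbᵀ * Sw⁻¹ * Sb * Sig⁻¹) := by
  have hu : IsUnit Sw.det := (Matrix.isUnit_iff_isUnit_det _).mp hSw.isUnit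
  rw [Mt_eq Sw Sig Sb hSw hSig hSb α]
  have expand : ((-(1/2 : ℝ)) • Sw - α • Sb) * Sw⁻¹ * ((-(1/2 : ℝ)) • Sw + α • Sb)
      = (1/4 : ℝ) • Sw + (α^2) • (Sbᵀ * Sw⁻¹ * Sb) := by
    rw [hSb]
    simp only [Matrix.sub_mul, Matrix.mul_add, Matrix.add_mul, Matrix.mul_sub,
      Matrix.smul_mul, Matrix.mul_smul, Matrix.neg_mul, Matrix.mul_neg, smul_smul,
      Matrix.mul_assoc, Matrix.nonsing_inv_mul Sw hu, Matrix.mul_one,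
      Matrix.mul_nonsing_inv_cancel_left _ _ hu]
    module
  calc Sig⁻¹ * ((-(1/2 : ℝ)) • Sw - α • Sb) * Sw⁻¹ * (((-(1/2 : ℝ)) • Sw + α • Sb) * Sig⁻¹)
      = Sig⁻¹ * (((-(1/2 : ℝ)) • Sw - α • Sb) * Sw⁻¹ * ((-(1/2 : ℝ)) • Sw + α • Sb)) * Sig⁻¹ := by
        simp only [Matrix.mul_assoc]
    _ = Sig⁻¹ * ((1/4 : ℝ) • Sw + (α^2) • (Sbᵀ * Sw⁻¹ * Sb)) * Sig⁻¹ := by rw [expand]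
    _ = (1/4 : ℝ) • (Sig⁻¹ * Sw * Sig⁻¹) + (α^2) • (Sig⁻¹ * Sbᵀ * Sw⁻¹ * Sb * Sig⁻¹) := by
        rw [Matrix.mul_add, Matrix.add_mul]
        simp only [Matrix.mul_smul, Matrix.smul_mul, Matrix.mul_assoc]

lemma Gt_eq (Sw Sig Sb : Matrix (Fin n) (Fin n) ℝ)
    (hSw : Sw.PosDef) (hSig : Sig.PosDef) (hSb : Sbᵀ = -Sb) :
    (Sig⁻¹ * Sb * Sw⁻¹)ᵀ = -(Sw⁻¹ * Sb * Sig⁻¹) := by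
  have hSigi : (Sig⁻¹)ᵀ = Sig⁻¹ := by
    rw [Matrix.transpose_nonsing_inv]; exact congrArg _ hSig.isHermitian.eq
  have hSwi : (Sw⁻¹)ᵀ = Sw⁻¹ := by
    rw [Matrix.transpose_nonsing_inv]; exact congrArg _ hSw.isHermitian.eq
  rw [Matrix.transpose_mul, Matrix.transpose_mul, hSigi, hSwi, hSb]
  simp only [Matrix.mul_neg, Matrix.neg_mul, Matrix.mul_assoc]

lemma identity2 (Sw Sig Sb : Matrix (Fin n) (Fin n) ℝ)
    (hSw : Sw.PosDef) (hSig : Sig.PosDef) (hSb : Sbᵀ = -Sb) (α : ℝ) :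
    Sw⁻¹ * ((((-(1/2 : ℝ)) • Sw + α • Sb)) * Sig⁻¹)
      - (((-(1/2 : ℝ)) • Sw + α • Sb) * Sig⁻¹)ᵀ * Sw⁻¹
      = α • ((Sig⁻¹ * Sb * Sw⁻¹) - (Sig⁻¹ * Sb * Sw⁻¹)ᵀ) := by
  have hu : IsUnit Sw.det := (Matrix.isUnit_iff_isUnit_det _).mp hSw.isUnit
  rw [Mt_eq Sw Sig Sb hSw hSig hSb α, Gt_eq Sw Sig Sb hSw hSig hSb]
  simp only [Matrix.mul_add, Matrix.add_mul, Matrix.mul_sub, Matrix.sub_mul,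
    Matrix.smul_mul, Matrix.mul_smul, Matrix.mul_assoc,
    Matrix.nonsing_inv_mul_cancel_left _ _ hu, Matrix.mul_nonsing_inv Sw hu,
    Matrix.mul_one, Matrix.one_mul]
  module

lemma map_ctR (P : Matrix (Fin n) (Fin n) ℝ) :
    (P.map Complex.ofReal)ᴴ = (Pᵀ).map Complex.ofReal := by
  ext i j; simp [conjTranspose_apply, Complex.conj_ofReal]

lemma Fmat_decomp (Sw Sig Sb : Matrix (Fin n) (Fin n) ℝ) (ω α : ℝ)
    (h1 : (((-(1/2 : ℝ)) • Sw + α • Sb) * Sig⁻¹)ᵀ * Sw⁻¹ * ((((-(1/2 : ℝ)) • Sw + α • Sb)) * Sig⁻¹)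
      = (1/4 : ℝ) • (Sig⁻¹ * Sw * Sig⁻¹) + (α^2) • (Sig⁻¹ * Sbᵀ * Sw⁻¹ * Sb * Sig⁻¹))
    (h2 : Sw⁻¹ * ((((-(1/2 : ℝ)) • Sw + α • Sb)) * Sig⁻¹)
      - (((-(1/2 : ℝ)) • Sw + α • Sb) * Sig⁻¹)ᵀ * Sw⁻¹
      = α • ((Sig⁻¹ * Sb * Sw⁻¹) - (Sig⁻¹ * Sb * Sw⁻¹)ᵀ)) :
    Fmat Sw Sig Sb ω α
      = ((ω^2 : ℝ) : ℂ) • ((Sw⁻¹).map Complex.ofReal)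
        + ((1/4 : ℝ) : ℂ) • ((Sig⁻¹ * Sw * Sig⁻¹).map Complex.ofReal)
        + ((α^2 : ℝ) : ℂ) • ((Sig⁻¹ * Sbᵀ * Sw⁻¹ * Sb * Sig⁻¹).map Complex.ofReal)
        + ((ω * α : ℝ) : ℂ) •
            (Complex.I • (((Sig⁻¹ * Sb * Sw⁻¹) - (Sig⁻¹ * Sb * Sw⁻¹)ᵀ).map Complex.ofReal)) := by
  set M := (((-(1/2 : ℝ)) • Sw + α • Sb) * Sig⁻¹) with hM
  set B' := (Sw⁻¹).map Complex.ofReal with hB'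
  have e1 : ((Mᵀ * Sw⁻¹ * M).map Complex.ofReal)
      = ((1/4 : ℝ) : ℂ) • ((Sig⁻¹ * Sw * Sig⁻¹).map Complex.ofReal)
        + ((α^2 : ℝ) : ℂ) • ((Sig⁻¹ * Sbᵀ * Sw⁻¹ * Sb * Sig⁻¹).map Complex.ofReal) := by
    rw [h1]; ext i j; simp
  have e2 : ((Sw⁻¹ * M).map Complex.ofReal) - ((Mᵀ * Sw⁻¹).map Complex.ofReal)
      = (α : ℂ) • (((Sig⁻¹ * Sb * Sw⁻¹) - (Sig⁻¹ * Sb * Sw⁻¹)ᵀ).map Complex.ofReal) := by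
    rw [show ((Sw⁻¹ * M).map Complex.ofReal) - ((Mᵀ * Sw⁻¹).map Complex.ofReal)
        = ((Sw⁻¹ * M - Mᵀ * Sw⁻¹).map Complex.ofReal) by ext i j; simp, h2]
    ext i j; simp
  have hmul1 : ((Mᵀ * Sw⁻¹).map Complex.ofReal) = ((Mᵀ).map Complex.ofReal) * B' :=
    Matrix.map_mul (f := Complex.ofRealHom)
  have hmul2 : ((Sw⁻¹ * M).map Complex.ofReal) = B' * (M.map Complex.ofReal) :=
    Matrix.map_mul (f := Complex.ofRealHom)
  have hmul3 : ((Mᵀ * Sw⁻¹ * M).map Complex.ofReal)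
      = ((Mᵀ).map Complex.ofReal) * B' * (M.map Complex.ofReal) := by
    rw [show (Mᵀ * Sw⁻¹ * M).map Complex.ofReal
        = ((Mᵀ * Sw⁻¹).map Complex.ofReal) * (M.map Complex.ofReal) from
      Matrix.map_mul (f := Complex.ofRealHom), hmul1]
  have e2' : B' * (M.map Complex.ofReal) = (Mᵀ).map Complex.ofReal * B'
      + (α : ℂ) • (((Sig⁻¹ * Sb * Sw⁻¹) - (Sig⁻¹ * Sb * Sw⁻¹)ᵀ).map Complex.ofReal) := by
    rw [← hmul1, ← hmul2, ← e2]; abel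
  have e1' : (Mᵀ).map Complex.ofReal * B' * (M.map Complex.ofReal)
      = ((1/4 : ℝ) : ℂ) • ((Sig⁻¹ * Sw * Sig⁻¹).map Complex.ofReal)
        + ((α^2 : ℝ) : ℂ) • ((Sig⁻¹ * Sbᵀ * Sw⁻¹ * Sb * Sig⁻¹).map Complex.ofReal) := by
    rw [← hmul3, e1]
  have hstar : (star ((ω : ℂ) * Complex.I)) = -((ω : ℂ) * Complex.I) := by
    simp [Complex.ext_iff]
  have hs2 : -((ω:ℂ) * Complex.I) * ((ω:ℂ) * Complex.I) = ((ω^2 : ℝ) : ℂ) := by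
    have h : ((ω:ℂ) * Complex.I) * ((ω:ℂ) * Complex.I) = (ω:ℂ)^2 * (Complex.I * Complex.I) := by
      ring
    rw [neg_mul, h, Complex.I_mul_I]
    push_cast
    ring
  have hs3 : ((ω:ℂ) * Complex.I) * -((ω:ℂ) * Complex.I) = ((ω^2 : ℝ) : ℂ) := by
    rw [mul_comm]; exact hs2
  have hs4 : ((ω:ℂ) * Complex.I) * ((ω:ℂ) * Complex.I) = -((ω^2 : ℝ) : ℂ) := by
    rw [← neg_eq_iff_eq_neg, ← neg_mul]; exact hs2
  rw [Fmat]
  simp only [Matrix.conjTranspose_sub, Matrix.conjTranspose_smul, Matrix.conjTranspose_one,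
    map_ctR, hstar, Matrix.sub_mul, Matrix.mul_sub, Matrix.smul_mul, Matrix.mul_smul,
    Matrix.one_mul, Matrix.mul_one, smul_smul, hs2, hs3, hs4, Matrix.mul_assoc]
  rw [← Matrix.mul_assoc ((Mᵀ).map Complex.ofReal) B' (M.map Complex.ofReal), e1',
    ← hB', e2']
  simp only [smul_sub, smul_add, smul_smul, hs2, hs3, hs4, Matrix.mul_assoc]
  module

/-- congruence preserves positive definiteness (real case, stated with explicit hermitian). -/
lemma posdef_congr {P B : Matrix (Fin n) (Fin n) ℝ} (hP : P.PosDef) (hB : IsUnit B)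
    (hH : (Bᴴ * P * B).IsHermitian) : (Bᴴ * P * B).PosDef := by
  refine Matrix.PosDef.of_dotProduct_mulVec_pos hH (fun x hx => ?_)
  have hBx : B *ᵥ x ≠ 0 := by
    have hinj := Matrix.mulVec_injective_iff_isUnit.mpr hB
    intro h
    exact hx (hinj (by simpa using h))
  have h := hP.dotProduct_mulVec_pos hBx
  simpa only [star_mulVec, dotProduct_mulVec, vecMul_vecMul, Matrix.mul_assoc] using h

lemma trace_bound {n : ℕ} (F : Matrix (Fin n) (Fin n) ℂ) (μ : ℝ) (hμ : 0 < μ)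
    (hpsd : (F - (μ : ℂ) • 1).PosSemidef) :
    ‖F⁻¹.trace‖ ≤ n * (1/μ) := by
  -- F is positive definite
  have h1 : ((μ : ℂ) • (1 : Matrix (Fin n) (Fin n) ℂ)).PosDef := by
    rw [Matrix.smul_one_eq_diagonal]
    exact Matrix.posDef_diagonal_iff.mpr (fun i => Complex.zero_lt_real.mpr hμ)
  have hFpd : F.PosDef := by
    have h2 := Matrix.PosDef.posSemidef_add hpsd h1
    rwa [sub_add_cancel] at h2
  have hdet : IsUnit F.det := (Matrix.isUnit_iff_isUnit_det _).mp hFpd.isUnit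
  have hinv_herm : (F⁻¹).IsHermitian := hFpd.posSemidef.inv.isHermitian
  -- diagonal entries of the inverse
  have diag_bound : ∀ i : Fin n, ‖F⁻¹ i i‖ ≤ 1/μ := by
    intro i
    set y : Fin n → ℂ := F⁻¹ *ᵥ Pi.single i 1 with hy
    have hyi : y i = F⁻¹ i i := by
      rw [hy]
      simp [Matrix.mulVec_single]
    have hFy : F *ᵥ y = Pi.single i 1 := by
      rw [hy, Matrix.mulVec_mulVec, Matrix.mul_nonsing_inv _ hdet, Matrix.one_mulVec]
    have h0 := hpsd.dotProduct_mulVec_nonneg y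
    rw [Matrix.sub_mulVec, dotProduct_sub, Matrix.smul_mulVec, Matrix.one_mulVec,
      dotProduct_smul, hFy, smul_eq_mul] at h0
    have hsy : star y ⬝ᵥ Pi.single i 1 = star (y i) := by
      simp [dotProduct, Pi.single_apply]
    rw [hsy] at h0
    -- real part bookkeeping
    set T : ℝ := ∑ j, Complex.normSq (y j) with hT
    have hTnn : 0 ≤ T := Finset.sum_nonneg fun j _ => Complex.normSq_nonneg _
    have ht_eq : star y ⬝ᵥ y = ((T : ℝ) : ℂ) := by
      rw [hT]
      push_cast
      simp only [dotProduct, Pi.star_apply]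
      refine Finset.sum_congr rfl fun j _ => ?_
      rw [Complex.star_def, ← Complex.normSq_eq_conj_mul_self]
    rw [ht_eq] at h0
    rw [Complex.le_def] at h0
    obtain ⟨h0re, h0im⟩ := h0
    have hμT : μ * T ≤ (y i).re := by
      have : ((star (y i)) - (μ : ℂ) * ((T : ℝ) : ℂ)).re = (y i).re - μ * T := by
        simp [Complex.sub_re, Complex.mul_re]
      rw [this] at h0re
      simp only [Complex.zero_re] at h0re
      linarith
    set d : ℝ := (y i).re with hdd
    have hd0 : 0 ≤ d := le_trans (mul_nonneg hμ.le hTnn) hμT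
    have hT1 : Complex.normSq (y i) ≤ T := by
      rw [hT]
      exact Finset.single_le_sum (fun j _ => Complex.normSq_nonneg _) (Finset.mem_univ i)
    have hd2 : d^2 ≤ Complex.normSq (y i) := by
      rw [Complex.normSq_apply, ← hdd]
      nlinarith [sq_nonneg (y i).im]
    have hdle : d ≤ 1/μ := by
      have k1 : μ * d^2 ≤ d := by
        calc μ * d^2 ≤ μ * T := by nlinarith [hd2, hT1]
          _ ≤ d := hμT
      rw [le_div_iff₀ hμ]
      nlinarith [k1, hd0, hμ]
    -- the diagonal entry is real
    have him : (F⁻¹ i i).im = 0 := by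
      have h := congrFun (congrFun hinv_herm.eq i) i
      rw [Matrix.conjTranspose_apply] at h
      have := congrArg Complex.im h
      simp [Complex.conj_im] at this
      linarith
    have : F⁻¹ i i = ((d : ℝ) : ℂ) := by
      apply Complex.ext
      · rw [hdd, hyi]
        simp
      · simp [him]
    rw [this, Complex.norm_real, Real.norm_eq_abs, abs_of_nonneg hd0]
    exact hdle
  -- sum up
  calc ‖F⁻¹.trace‖ = ‖∑ i, F⁻¹ i i‖ := by rfl
    _ ≤ ∑ i : Fin n, ‖F⁻¹ i i‖ := norm_sum_le _ _
    _ ≤ ∑ _i : Fin n, 1/μ := Finset.sum_le_sum (fun i _ => diag_bound i)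
    _ = n * (1/μ) := by simp [Finset.sum_const, mul_comm]

end Helpers

set_option maxHeartbeats 4000000 in
theorem stmt19 {n : ℕ} (hn : 0 < n) (Sw Sig Sb : Matrix (Fin n) (Fin n) ℝ)
    (hSw : Sw.PosDef) (hSig : Sig.PosDef) (hSb : Sbᵀ = -Sb) (hSbrk : IsUnit Sb)
    (hHa : (Sig⁻¹ * Sw * Sig⁻¹).IsHermitian)
    (hHb : (Sw⁻¹).IsHermitian)
    (hHc : (Sig⁻¹ * Sbᵀ * Sw⁻¹ * Sb * Sig⁻¹).IsHermitian)
    (at_ bt ct dt : ℝ)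
    (ha : at_ = ⨅ i, hHa.eigenvalues i)
    (hb : bt = ⨅ i, hHb.eigenvalues i)
    (hc : ct = ⨅ i, hHc.eigenvalues i)
    (hd : dt = ‖toEuclideanCLM (𝕜 := ℝ) (Sig⁻¹ * Sb * Sw⁻¹)‖)
    (ωbar : ℝ) (hωbar : 0 < ωbar) (αbar : ℝ)
    (hαbar : αbar = 4 * (dt / bt) * ωbar / (ct / bt)) :
    (∀ ω α : ℝ, |ω| ≤ ωbar → αbar ≤ α →
      (Fmat Sw Sig Sb ω α -
        (((at_ / 4 + bt * α^2 * (ct / bt) / 2 : ℝ) : ℂ)) •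
          (1 : Matrix (Fin n) (Fin n) ℂ)).PosSemidef) ∧
    (∀ ε : ℝ, 0 < ε → ∃ α0 : ℝ, ∀ α : ℝ, α0 ≤ α → ∀ ω : ℝ, |ω| ≤ ωbar →
      ‖((Fmat Sw Sig Sb ω α)⁻¹).trace‖ < ε) := by
  have hne : Nonempty (Fin n) := Fin.pos_iff_nonempty.mp hn
  -- generic facts about finite infima
  have inf_le : ∀ (f : Fin n → ℝ) (i : Fin n), (⨅ j, f j) ≤ f i := fun f i =>
    ciInf_le (Set.Finite.bddBelow (Set.finite_range f)) i
  have inf_pos : ∀ (f : Fin n → ℝ), (∀ i, 0 < f i) → 0 < ⨅ i, f i := by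
    intro f hf
    obtain ⟨i0, hi0⟩ := Finite.exists_min f
    exact lt_of_lt_of_le (hf i0) (le_ciInf hi0)
  -- basic units and posdefs
  have hSigiu : IsUnit (Sig⁻¹) := Matrix.isUnit_nonsing_inv_iff.mpr hSig.isUnit
  have hBpd : (Sw⁻¹).PosDef := hSw.inv
  have hApd : (Sig⁻¹ * Sw * Sig⁻¹).PosDef := by
    have hh : ((Sig⁻¹)ᴴ * Sw * Sig⁻¹).IsHermitian := by
      rwa [hSig.isHermitian.inv.eq]
    have := posdef_congr hSw hSigiu hh
    rwa [hSig.isHermitian.inv.eq] at this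
  have hCpd : (Sig⁻¹ * Sbᵀ * Sw⁻¹ * Sb * Sig⁻¹).PosDef := by
    have hBu : IsUnit (Sb * Sig⁻¹) := hSbrk.mul hSigiu
    have hctr : (Sb * Sig⁻¹)ᴴ = Sig⁻¹ * Sbᵀ := by
      rw [Matrix.conjTranspose_mul, hSig.isHermitian.inv.eq]
      rfl
    have hh : ((Sb * Sig⁻¹)ᴴ * Sw⁻¹ * (Sb * Sig⁻¹)).IsHermitian := by
      rw [hctr]
      simpa only [Matrix.mul_assoc] using hHc
    have := posdef_congr hBpd hBu hh
    rw [hctr] at this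
    simpa only [Matrix.mul_assoc] using this
  -- positivity of the scalars
  have hat : 0 < at_ := by rw [ha]; exact inf_pos _ (fun i => hApd.eigenvalues_pos i)
  have hbt : 0 < bt := by rw [hb]; exact inf_pos _ (fun i => hBpd.eigenvalues_pos i)
  have hct : 0 < ct := by rw [hc]; exact inf_pos _ (fun i => hCpd.eigenvalues_pos i)
  have hdt : 0 ≤ dt := by rw [hd]; exact norm_nonneg _
  have hαbar' : αbar = 4 * dt * ωbar / ct := by
    rw [hαbar]
    field_simp
  have hαbar0 : 0 ≤ αbar := by
    rw [hαbar']
    positivity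
  -- PSD facts for the eigenvalue bounds
  have hA_psd : ((Sig⁻¹ * Sw * Sig⁻¹) - at_ • 1).PosSemidef :=
    psd_sub_smul hHa (fun i => by rw [ha]; exact inf_le _ i)
  have hB_psd : ((Sw⁻¹) - bt • 1).PosSemidef :=
    psd_sub_smul hHb (fun i => by rw [hb]; exact inf_le _ i)
  have hC_psd : ((Sig⁻¹ * Sbᵀ * Sw⁻¹ * Sb * Sig⁻¹) - ct • 1).PosSemidef :=
    psd_sub_smul hHc (fun i => by rw [hc]; exact inf_le _ i)
  have hswap : ∀ (P : Matrix (Fin n) (Fin n) ℝ) (a b : Fin n → ℝ),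
      a ⬝ᵥ (Pᵀ *ᵥ b) = b ⬝ᵥ (P *ᵥ a) := by
    intro P a b
    rw [dotProduct_mulVec, Matrix.vecMul_transpose, dotProduct_comm]
  have herm_t : ∀ {P : Matrix (Fin n) (Fin n) ℝ}, P.IsHermitian → Pᵀ = P := by
    intro P hP
    conv_rhs => rw [← hP.eq]
    ext i j
    simp [Matrix.conjTranspose_apply]
  have hμsimp : ∀ α : ℝ, bt * α^2 * (ct / bt) / 2 = α^2 * ct / 2 := by
    intro α
    field_simp
  -- Part 1
  have part1 : ∀ ω α : ℝ, |ω| ≤ ωbar → αbar ≤ α →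
      (Fmat Sw Sig Sb ω α -
        (((at_ / 4 + bt * α^2 * (ct / bt) / 2 : ℝ) : ℂ)) •
          (1 : Matrix (Fin n) (Fin n) ℂ)).PosSemidef := by
    intro ω α hω hα
    have hα0 : 0 ≤ α := le_trans hαbar0 hα
    have hF := Fmat_decomp Sw Sig Sb ω α
      (identity1 Sw Sig Sb hSw hSig hSb α) (identity2 Sw Sig Sb hSw hSig hSb α)
    refine Matrix.PosSemidef.of_dotProduct_mulVec_nonneg ?_ ?_
    · -- Hermitian
      have hB'h : ((Sw⁻¹).map Complex.ofReal).IsHermitian := by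
        rw [Matrix.IsHermitian, map_ctR, herm_t hHb]
      have hFh : (Fmat Sw Sig Sb ω α).IsHermitian := by
        rw [Fmat]
        exact Matrix.isHermitian_conjTranspose_mul_mul _ hB'h
      have h1h : (((at_ / 4 + bt * α^2 * (ct / bt) / 2 : ℝ) : ℂ) •
          (1 : Matrix (Fin n) (Fin n) ℂ)).IsHermitian := by
        rw [Matrix.IsHermitian, Matrix.conjTranspose_smul, Matrix.conjTranspose_one]
        congr 1
        exact Complex.conj_ofReal _
      exact hFh.sub h1h
    · intro x
      rw [hF]
      set u : Fin n → ℝ := fun j => (x j).re with hu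
      set v : Fin n → ℝ := fun j => (x j).im with hv
      -- quadratic forms of symmetric matrices
      have qsym : ∀ (P : Matrix (Fin n) (Fin n) ℝ), Pᵀ = P →
          star x ⬝ᵥ ((P.map Complex.ofReal) *ᵥ x)
            = ((u ⬝ᵥ (P *ᵥ u) + v ⬝ᵥ (P *ᵥ v) : ℝ) : ℂ) := by
        intro P hP
        rw [quad_decomp]
        have h0 : u ⬝ᵥ (P *ᵥ v) - v ⬝ᵥ (P *ᵥ u) = 0 := by
          rw [← hP, hswap P v u, hP]
          ring
        rw [← hu, ← hv, h0]
        simp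
      set G := Sig⁻¹ * Sb * Sw⁻¹ with hG
      have qK : star x ⬝ᵥ (((G - Gᵀ).map Complex.ofReal) *ᵥ x)
          = ((2 * (u ⬝ᵥ (G *ᵥ v) - v ⬝ᵥ (G *ᵥ u)) : ℝ) : ℂ) * Complex.I := by
        rw [quad_decomp, ← hu, ← hv]
        have hz : ∀ w : Fin n → ℝ, w ⬝ᵥ ((G - Gᵀ) *ᵥ w) = 0 := by
          intro w
          rw [Matrix.sub_mulVec, dotProduct_sub, hswap G w w]
          ring
        have hw : u ⬝ᵥ ((G - Gᵀ) *ᵥ v) - v ⬝ᵥ ((G - Gᵀ) *ᵥ u)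
            = 2 * (u ⬝ᵥ (G *ᵥ v) - v ⬝ᵥ (G *ᵥ u)) := by
          rw [Matrix.sub_mulVec, Matrix.sub_mulVec, dotProduct_sub, dotProduct_sub,
            hswap G u v, hswap G v u]
          ring
        rw [hz u, hz v, hw]
        simp
      have qone : star x ⬝ᵥ x = ((u ⬝ᵥ u + v ⬝ᵥ v : ℝ) : ℂ) := by
        have h1 : star x ⬝ᵥ x = star x ⬝ᵥ (((1 : Matrix (Fin n) (Fin n) ℝ).map Complex.ofReal) *ᵥ x) := by
          rw [show ((1 : Matrix (Fin n) (Fin n) ℝ).map Complex.ofReal)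
              = (1 : Matrix (Fin n) (Fin n) ℂ) by ext i j; simp [Matrix.one_apply]; split <;> simp]
          rw [Matrix.one_mulVec]
        rw [h1, quad_decomp, ← hu, ← hv]
        simp [Matrix.one_mulVec, dotProduct_comm]
      -- expand the quadratic form
      simp only [Matrix.sub_mulVec, Matrix.add_mulVec, Matrix.smul_mulVec,
        dotProduct_sub, dotProduct_add, dotProduct_smul, Matrix.one_mulVec, smul_eq_mul]
      rw [qsym _ (herm_t hHb), qsym _ (herm_t hHa), qsym _ (herm_t hHc), qK, qone]
      have hI : Complex.I * (((2 * (u ⬝ᵥ (G *ᵥ v) - v ⬝ᵥ (G *ᵥ u)) : ℝ) : ℂ) * Complex.I)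
          = -((2 * (u ⬝ᵥ (G *ᵥ v) - v ⬝ᵥ (G *ᵥ u)) : ℝ) : ℂ) := by
        rw [mul_comm, mul_assoc, Complex.I_mul_I]
        ring
      rw [hI]
      -- reduce to a real inequality
      set s1 := u ⬝ᵥ u with hs1
      set s2 := v ⬝ᵥ v with hs2
      have collapse : ((ω^2 : ℝ) : ℂ) * ((u ⬝ᵥ (Sw⁻¹ *ᵥ u) + v ⬝ᵥ (Sw⁻¹ *ᵥ v) : ℝ) : ℂ)
            + ((1/4 : ℝ) : ℂ) * ((u ⬝ᵥ ((Sig⁻¹ * Sw * Sig⁻¹) *ᵥ u)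
                + v ⬝ᵥ ((Sig⁻¹ * Sw * Sig⁻¹) *ᵥ v) : ℝ) : ℂ)
            + ((α^2 : ℝ) : ℂ) * ((u ⬝ᵥ ((Sig⁻¹ * Sbᵀ * Sw⁻¹ * Sb * Sig⁻¹) *ᵥ u)
                + v ⬝ᵥ ((Sig⁻¹ * Sbᵀ * Sw⁻¹ * Sb * Sig⁻¹) *ᵥ v) : ℝ) : ℂ)
            + ((ω * α : ℝ) : ℂ) * -((2 * (u ⬝ᵥ (G *ᵥ v) - v ⬝ᵥ (G *ᵥ u)) : ℝ) : ℂ)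
            - ((at_ / 4 + bt * α^2 * (ct / bt) / 2 : ℝ) : ℂ) * ((s1 + s2 : ℝ) : ℂ)
          = (((ω^2) * (u ⬝ᵥ (Sw⁻¹ *ᵥ u) + v ⬝ᵥ (Sw⁻¹ *ᵥ v))
            + (1/4) * (u ⬝ᵥ ((Sig⁻¹ * Sw * Sig⁻¹) *ᵥ u) + v ⬝ᵥ ((Sig⁻¹ * Sw * Sig⁻¹) *ᵥ v))
            + (α^2) * (u ⬝ᵥ ((Sig⁻¹ * Sbᵀ * Sw⁻¹ * Sb * Sig⁻¹) *ᵥ u)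
                + v ⬝ᵥ ((Sig⁻¹ * Sbᵀ * Sw⁻¹ * Sb * Sig⁻¹) *ᵥ v))
            - (ω * α) * (2 * (u ⬝ᵥ (G *ᵥ v) - v ⬝ᵥ (G *ᵥ u)))
            - (at_ / 4 + bt * α^2 * (ct / bt) / 2) * (s1 + s2) : ℝ) : ℂ) := by
        push_cast
        ring
      rw [collapse, Complex.zero_le_real]
      -- now a purely real inequality
      have hs1n : 0 ≤ s1 := by
        rw [hs1]
        exact Finset.sum_nonneg fun i _ => mul_self_nonneg _
      have hs2n : 0 ≤ s2 := by
        rw [hs2]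
        exact Finset.sum_nonneg fun i _ => mul_self_nonneg _
      have qB1 := quad_lb hB_psd u
      have qB2 := quad_lb hB_psd v
      have qA1 := quad_lb hA_psd u
      have qA2 := quad_lb hA_psd v
      have qC1 := quad_lb hC_psd u
      have qC2 := quad_lb hC_psd v
      have hG1 := bilin_bound G u v
      have hG2 := bilin_bound G v u
      rw [← hd] at hG1 hG2
      have hsqrt : 2 * (Real.sqrt s1 * Real.sqrt s2) ≤ s1 + s2 := by
        nlinarith [Real.sq_sqrt hs1n, Real.sq_sqrt hs2n,
          sq_nonneg (Real.sqrt s1 - Real.sqrt s2)]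
      have habs : |u ⬝ᵥ (G *ᵥ v) - v ⬝ᵥ (G *ᵥ u)| ≤ dt * (s1 + s2) := by
        have h1 : |u ⬝ᵥ (G *ᵥ v) - v ⬝ᵥ (G *ᵥ u)| ≤ |u ⬝ᵥ (G *ᵥ v)| + |v ⬝ᵥ (G *ᵥ u)| :=
          abs_sub _ _
        have h2 : dt * Real.sqrt s1 * Real.sqrt s2 + dt * Real.sqrt s2 * Real.sqrt s1
            ≤ dt * (s1 + s2) := by
          nlinarith [hsqrt, hdt, Real.sqrt_nonneg s1, Real.sqrt_nonneg s2]
        calc |u ⬝ᵥ (G *ᵥ v) - v ⬝ᵥ (G *ᵥ u)|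
            ≤ |u ⬝ᵥ (G *ᵥ v)| + |v ⬝ᵥ (G *ᵥ u)| := h1
          _ ≤ dt * Real.sqrt s1 * Real.sqrt s2 + dt * Real.sqrt s2 * Real.sqrt s1 := by
              rw [hs1, hs2]
              exact add_le_add hG1 hG2
          _ ≤ dt * (s1 + s2) := h2
      -- the cross term bound
      have hcross : (ω * α) * (2 * (u ⬝ᵥ (G *ᵥ v) - v ⬝ᵥ (G *ᵥ u)))
          ≤ 2 * |ω| * α * (dt * (s1 + s2)) := by
        have h1 : (ω * α) * (2 * (u ⬝ᵥ (G *ᵥ v) - v ⬝ᵥ (G *ᵥ u)))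
            ≤ |(ω * α) * (2 * (u ⬝ᵥ (G *ᵥ v) - v ⬝ᵥ (G *ᵥ u)))| := le_abs_self _
        have h2 : |(ω * α) * (2 * (u ⬝ᵥ (G *ᵥ v) - v ⬝ᵥ (G *ᵥ u)))|
            = 2 * |ω| * α * |u ⬝ᵥ (G *ᵥ v) - v ⬝ᵥ (G *ᵥ u)| := by
          rw [abs_mul, abs_mul, abs_mul, abs_of_nonneg hα0,
            abs_of_nonneg (by norm_num : (0:ℝ) ≤ 2)]
          ring
        have h3 : 2 * |ω| * α * |u ⬝ᵥ (G *ᵥ v) - v ⬝ᵥ (G *ᵥ u)|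
            ≤ 2 * |ω| * α * (dt * (s1 + s2)) := by
          apply mul_le_mul_of_nonneg_left habs
          positivity
        linarith
      have hαct : 4 * dt * ωbar ≤ α * ct := by
        rw [hαbar'] at hα
        calc 4 * dt * ωbar = (4 * dt * ωbar / ct) * ct := by field_simp
          _ ≤ α * ct := mul_le_mul_of_nonneg_right hα hct.le
      have h1 : 2 * (|ω| * dt) ≤ α * ct / 2 := by
        have hh : |ω| * dt ≤ ωbar * dt := mul_le_mul_of_nonneg_right hω hdt
        nlinarith
      have hfin : 2 * |ω| * α * (dt * (s1 + s2)) ≤ (α^2 * ct / 2) * (s1 + s2) := by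
        have := mul_le_mul_of_nonneg_right h1 (mul_nonneg hα0 (add_nonneg hs1n hs2n))
        nlinarith [this]
      rw [hμsimp α]
      nlinarith [mul_le_mul_of_nonneg_left (add_le_add qB1 qB2) (sq_nonneg ω),
        mul_le_mul_of_nonneg_left (add_le_add qC1 qC2) (sq_nonneg α),
        qA1, qA2, hcross, hfin, sq_nonneg ω, mul_nonneg (mul_nonneg hbt.le (sq_nonneg ω)) (add_nonneg hs1n hs2n)]
  refine ⟨part1, ?_⟩
  intro ε hε
  refine ⟨max αbar (Real.sqrt (4*n/(ct*ε)) + 1), ?_⟩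
  intro α hα0 ω hω
  have hαbar_le : αbar ≤ α := le_trans (le_max_left _ _) hα0
  have hsq : Real.sqrt (4*n/(ct*ε)) + 1 ≤ α := le_trans (le_max_right _ _) hα0
  have hX : (0:ℝ) ≤ 4*n/(ct*ε) := by positivity
  have hα1 : (1:ℝ) ≤ α := le_trans (by linarith [Real.sqrt_nonneg (4*n/(ct*ε))]) hsq
  have hα2 : 4*n/(ct*ε) < α^2 := by
    have h1 : Real.sqrt (4*n/(ct*ε)) < α := by linarith
    have h2 : 0 ≤ Real.sqrt (4*n/(ct*ε)) := Real.sqrt_nonneg _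
    nlinarith [Real.sq_sqrt hX]
  set μ := at_/4 + bt * α^2 * (ct/bt)/2 with hμdef
  have hμlb : α^2*ct/2 ≤ μ := by
    rw [hμdef, hμsimp α]
    linarith
  have hμpos : 0 < μ := lt_of_lt_of_le (by nlinarith) hμlb
  have hbnd := trace_bound (Fmat Sw Sig Sb ω α) μ hμpos (part1 ω α hω hαbar_le)
  have hn1 : (1:ℝ) ≤ (n:ℝ) := by exact_mod_cast Nat.one_le_iff_ne_zero.mpr hn.ne'
  have hctε : (0:ℝ) < ct*ε := by positivity
  have hα2' : 4*(n:ℝ) < α^2*(ct*ε) := (div_lt_iff₀ hctε).mp hα2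
  have k1 : (2*(n:ℝ))/ε < μ := by
    refine lt_of_lt_of_le ?_ hμlb
    rw [div_lt_iff₀ hε]
    nlinarith [hα2']
  have k1' : 2*(n:ℝ) < μ*ε := (div_lt_iff₀ hε).mp k1
  have hfin : (n:ℝ) * (1/μ) < ε := by
    rw [mul_one_div, div_lt_iff₀ hμpos]
    nlinarith [hε, hn1, k1']
  exact lt_of_le_of_lt hbnd hfin
end
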